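/- arXiv:2505.01793 — 10 statements merged into one kernel-verified Lean document; each statement's English description precedes it below -/
import Mathlib

section
/- Suppose f < εn for a constant 0 < ε < 1/2, and let B be the total number of incorrect bits across the prediction vectors of all honest processes. Then the number of processes misclassified by at least one honest process after the majority-voting classification is at most B / (⌈n/2⌉ − f), and hence O(B/n). -/
/-!
A process `j` that some honest process misclassifies must have been misjudged by many honest
predictors: the at most `f` faulty votes cannot by themselves push the tally for `j` across the
majority threshold in either direction, so at least `⌈n/2⌉ − f` honest vectors are wrong about
`j`. Double counting the wrong bits, once per predictor and once per target, gives
`#misclassified · (⌈n/2⌉ − f) ≤ B`.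
-/

open Finset

section MajorityVote

variable {ι : Type*} [Fintype ι] [DecidableEq ι] {H F : Finset ι}

lemma card_le_card_add_card_of_cover (hcover : ∀ i, i ∈ H ∨ i ∈ F) :
    Fintype.card ι ≤ #H + #F := by
  calc Fintype.card ι = #(univ : Finset ι) := card_univ.symm
    _ ≤ #(H ∪ F) := card_le_card fun i _ => mem_union.2 (hcover i)
    _ ≤ #H + #F := card_union_le H F

lemma card_filter_le_card_filter_add_card_of_cover (hcover : ∀ i, i ∈ H ∨ i ∈ F)
    (p : ι → Prop) [DecidablePred p] :
    #{i | p i} ≤ #(H.filter p) + #F := by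
  calc #{i | p i} ≤ #((H ∪ F).filter p) :=
        card_le_card fun i hi => mem_filter.2 ⟨mem_union.2 (hcover i), (mem_filter.1 hi).2⟩
    _ ≤ #(H.filter p) + #(F.filter p) := by
        rw [filter_union]
        exact card_union_le _ _
    _ ≤ #(H.filter p) + #F := Nat.add_le_add_left (card_filter_le F p) _

variable (hcover : ∀ i, i ∈ H ∨ i ∈ F) {votes v : ι → Bool} (hagree : ∀ s ∈ H, votes s = v s)
include hcover hagree

lemma sub_le_card_filter_ne_true_of_card_lt {t : ℕ} (hreject : #{s | votes s = true} < t) :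
    Fintype.card ι + 1 - t - #F ≤ #(H.filter fun s => v s ≠ true) := by
  have hhonest_yes : #(H.filter fun s => v s = true) ≤ #{s | votes s = true} :=
    card_le_card fun s hs => by
      obtain ⟨hsH, hvs⟩ := mem_filter.1 hs
      exact mem_filter.2 ⟨mem_univ s, (hagree s hsH).trans hvs⟩
  have hsplit : #(H.filter fun s => v s = true) + #(H.filter fun s => v s ≠ true) = #H :=
    card_filter_add_card_filter_not _
  have hcard := card_le_card_add_card_of_cover hcover
  omega

lemma sub_le_card_filter_ne_false_of_le_card {t : ℕ} (haccept : t ≤ #{s | votes s = true}) :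
    t - #F ≤ #(H.filter fun s => v s ≠ false) := by
  have hyes := card_filter_le_card_filter_add_card_of_cover hcover fun s => votes s = true
  have hhonest_yes : H.filter (fun s => votes s = true) = H.filter fun s => v s ≠ false :=
    filter_congr fun s hs => by rw [hagree s hs, ne_eq, Bool.not_eq_false]
  rw [hhonest_yes] at hyes
  omega

lemma half_sub_card_le_card_filter_ne_of_verdict_ne {n : ℕ} (hn : Fintype.card ι = n)
    {verdict truth : Bool} (hverdict : verdict = true ↔ (n + 2) / 2 ≤ #{s | votes s = true})
    (hwrong : verdict ≠ truth) :
    (n + 1) / 2 - #F ≤ #(H.filter fun s => v s ≠ truth) := by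
  cases truth
  · have := sub_le_card_filter_ne_false_of_le_card hcover hagree
      (hverdict.1 (Bool.eq_true_of_not_eq_false hwrong))
    omega
  · have := sub_le_card_filter_ne_true_of_card_lt hcover hagree
      (not_le.1 (mt hverdict.2 hwrong))
    omega

end MajorityVote

open Classical in
theorem misclassified_count_bound_general
    (n f B : ℕ)
    (H F : Finset (Fin n))
    (hpart : ∀ i, i ∈ H ∨ i ∈ F)
    (hF : F.card = f)
    (a : Fin n → Fin n → Bool)              -- actual prediction vectors of the processes
    (recv : Fin n → Fin n → Fin n → Bool)   -- recv i s = vector process i received from s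
    (hrecv : ∀ i ∈ H, ∀ s ∈ H, recv i s = a s)
    (c : Fin n → Fin n → Bool)              -- resulting classification vectors
    (hc : ∀ i ∈ H, ∀ j, (c i j = true ↔
      (n + 2) / 2 ≤ (Finset.univ.filter (fun s => recv i s j = true)).card))
    (hB : B = ∑ i ∈ H, (Finset.univ.filter (fun j => a i j ≠ decide (j ∈ H))).card) :
    (Finset.univ.filter (fun j : Fin n => ∃ i ∈ H, c i j ≠ decide (j ∈ H))).card
      * ((n + 1) / 2 - f) ≤ B := by
  set misclassified := univ.filter fun j : Fin n => ∃ i ∈ H, c i j ≠ decide (j ∈ H)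
  set wrong : Fin n → ℕ := fun j => #(H.filter fun s => a s j ≠ decide (j ∈ H))
  have hmis : ∀ j ∈ misclassified, (n + 1) / 2 - f ≤ wrong j := by
    intro j hj
    obtain ⟨i, hi, hcij⟩ := (mem_filter.1 hj).2
    have hagree : ∀ s ∈ H, recv i s j = a s j := fun s hs => by rw [hrecv i hi s hs]
    exact hF ▸ half_sub_card_le_card_filter_ne_of_verdict_ne hpart hagree (Fintype.card_fin n)
      (hc i hi j) hcij
  calc #misclassified * ((n + 1) / 2 - f) = #misclassified • ((n + 1) / 2 - f) :=
        (smul_eq_mul _ _).symm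
    _ ≤ ∑ j ∈ misclassified, wrong j := card_nsmul_le_sum _ _ _ hmis
    _ ≤ ∑ j, wrong j := sum_le_sum_of_subset (filter_subset _ _)
    _ = B := by
        rw [hB]
        exact (sum_card_bipartiteAbove_eq_sum_card_bipartiteBelow
          (r := fun i j => a i j ≠ decide (j ∈ H))).symm

open Classical in
/-- If `f < εn` for a constant `0 < ε < 1/2` and `B` is the total number of
incorrect prediction bits across the prediction vectors of all honest processes, then the
number of processes misclassified (by at least one honest process) after the majority-voting
classification is at most `B / (⌈n/2⌉ − f)`, stated multiplicatively:
`(#misclassified) * ((n+1)/2 − f) ≤ B` (and hence the count is `O(B/n)`). -/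
theorem misclassified_count_bound
    (n f B : ℕ) (ε : ℝ) (hε0 : 0 < ε) (hε : ε < 1/2)
    (H F : Finset (Fin n))
    (hpart : ∀ i, i ∈ H ∨ i ∈ F) (hdisj : Disjoint H F)
    (hF : F.card = f) (hf : (f : ℝ) < ε * n)
    (a : Fin n → Fin n → Bool)              -- actual prediction vectors of the processes
    (recv : Fin n → Fin n → Fin n → Bool)   -- recv i s = vector process i received from s
    (hrecv : ∀ i ∈ H, ∀ s ∈ H, recv i s = a s)
    (c : Fin n → Fin n → Bool)              -- resulting classification vectors
    (hc : ∀ i ∈ H, ∀ j, (c i j = true ↔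
      (n + 2) / 2 ≤ (Finset.univ.filter (fun s => recv i s j = true)).card))
    (hB : B = ∑ i ∈ H, (Finset.univ.filter (fun j => a i j ≠ decide (j ∈ H))).card) :
    (Finset.univ.filter (fun j : Fin n => ∃ i ∈ H, c i j ≠ decide (j ∈ H))).card
      * ((n + 1) / 2 - f) ≤ B :=
  misclassified_count_bound_general n f B H F hpart hF a recv hrecv c hc hB
end

section
/- Let c, ĉ ∈ {0,1}^n be classification vectors, where ĉ is the correct classification, and suppose c and ĉ differ in at most m positions (c misclassifies m processes). If c[i] = ĉ[i] (process p_i is properly classified by c), then the positions of index i in the orderings π(c) and π(ĉ) differ by at most m. -/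
/-- The (1-indexed) position of index `i` in the ordering `π(c)`, which places indices with
`c`-bit `1` first (in increasing order), followed by indices with `c`-bit `0`
(in increasing order). -/
def piPos {n : ℕ} (c : Fin n → Bool) (i : Fin n) : ℕ :=
  if c i then (Finset.univ.filter (fun j => j ≤ i ∧ c j)).card
  else (i : ℕ) + 1 + (Finset.univ.filter (fun j => i < j ∧ c j)).card

/-!
If `c i = ĉ i`, the position of `i` in `π(c)` is, up to a term that depends only on `i`,
the number of indices `j` in a fixed range (`j ≤ i` or `i < j`) with `c j = 1`. Changing `c`
to `ĉ` changes this count only through indices where they disagree, so by at most `m`.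
-/

open Finset

section CountingDisagreements

variable {α : Type*} [Fintype α] [DecidableEq α]

theorem card_filter_and_le_card_filter_and_add_card_filter_ne (p : α → Prop)
    [DecidablePred p] (c d : α → Bool) :
    #{j | p j ∧ c j} ≤ #{j | p j ∧ d j} + #{j | c j ≠ d j} := by
  calc #{j | p j ∧ c j}
      ≤ #(({j | p j ∧ d j} : Finset α) ∪ ({j | c j ≠ d j} : Finset α)) := by
        refine card_le_card fun j hj => ?_
        simp only [mem_filter, mem_univ, true_and, mem_union] at hj ⊢
        cases hd : d j <;> simp_all
    _ ≤ #{j | p j ∧ d j} + #{j | c j ≠ d j} := card_union_le _ _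

theorem abs_card_filter_and_sub_card_filter_and_le (p : α → Prop) [DecidablePred p]
    (c d : α → Bool) :
    |(#{j | p j ∧ c j} : ℤ) - #{j | p j ∧ d j}| ≤ #{j | c j ≠ d j} := by
  have hcd := card_filter_and_le_card_filter_and_add_card_filter_ne p c d
  have hdc := card_filter_and_le_card_filter_and_add_card_filter_ne p d c
  simp only [ne_comm (a := d _)] at hdc
  rw [abs_sub_le_iff]
  constructor <;> omega

end CountingDisagreements

theorem abs_piPos_sub_piPos_le {n : ℕ} (c d : Fin n → Bool) {i : Fin n} (hi : c i = d i) :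
    |(piPos c i : ℤ) - piPos d i| ≤ #{j | c j ≠ d j} := by
  unfold piPos
  rw [hi]
  split
  · exact abs_card_filter_and_sub_card_filter_and_le (· ≤ i) c d
  · push_cast
    rw [add_sub_add_left_eq_sub]
    exact abs_card_filter_and_sub_card_filter_and_le (i < ·) c d

/-- If classification vectors `c` and `ĉ` differ in at most `m` positions and
`c i = ĉ i` (process `i` is properly classified by `c`), then the positions of `i` in the
orderings `π(c)` and `π(ĉ)` differ by at most `m`. -/
theorem position_shift_bound {n : ℕ} (c chat : Fin n → Bool) (m : ℕ)
    (hm : (Finset.univ.filter (fun j => c j ≠ chat j)).card ≤ m)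
    (i : Fin n) (hi : c i = chat i) :
    |(piPos c i : ℤ) - (piPos chat i : ℤ)| ≤ (m : ℤ) :=
  (abs_piPos_sub_piPos_le c chat hi).trans (by exact_mod_cast hm)
end

section
/- Suppose the total number of misclassified processes (processes misclassified by at least one honest process) is k_A, and at most t processes are faulty. If c is the classification vector of an honest process, p_i is a faulty process, and the position of i in π(c) is at most n − t − k_A, then c misclassifies p_i (i.e., c[i] = 1). -/
open Finset

section Misclassification

variable {α : Type*} [Fintype α] [DecidableEq α]

def misclassified (H : Finset α) (c : α → α → Bool) : Finset α :=
  univ.filter fun j => ∃ i ∈ H, c i j ≠ decide (j ∈ H)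

theorem card_filter_classified_faulty_le {H F : Finset α} (hpart : ∀ j, j ∈ H ∨ j ∈ F)
    (c : α → α → Bool) {i : α} (hi : i ∈ H) :
    #(univ.filter fun j => c i j = false) ≤ #F + #(misclassified H c) := by
  refine (card_le_card fun j hj => ?_).trans (card_union_le F _)
  rw [mem_filter] at hj
  rcases hpart j with hjH | hjF
  · exact mem_union_right _ (mem_filter.2 ⟨mem_univ j, i, hi, by simp [hj.2, hjH]⟩)
  · exact mem_union_left _ hjF

end Misclassification

/-- Every index except the later ones classified faulty comes no later than `i` in `π(c)`. -/
theorem piPos_add_card_filter_gt_false {n : ℕ} {c : Fin n → Bool} {i : Fin n}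
    (hci : c i = false) :
    piPos c i + #(univ.filter fun j => i < j ∧ c j = false) = n := by
  have hsplit := card_filter_add_card_filter_not (s := univ.filter (i < ·)) (fun j => c j = true)
  rw [filter_filter, filter_filter, filter_lt_eq_Ioi, Fin.card_Ioi] at hsplit
  simp only [Bool.not_eq_true] at hsplit
  simp only [piPos, hci, Bool.false_eq_true, if_false]
  have := i.isLt
  omega

open Classical in
theorem early_faulty_is_misclassified_general {n t kA : ℕ}
    (H F : Finset (Fin n))
    (hpart : ∀ i, i ∈ H ∨ i ∈ F)
    (hFt : F.card ≤ t)
    (c : Fin n → Fin n → Bool)  -- classification vectors (those of honest processes matter)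
    (hkA : (Finset.univ.filter (fun j : Fin n => ∃ i ∈ H, c i j ≠ decide (j ∈ H))).card = kA)
    (i : Fin n) (hi : i ∈ H)
    (p : Fin n)
    (hpos : piPos (c i) p ≤ n - t - kA) :
    c i p = true := by
  by_contra hcp
  rw [Bool.not_eq_true] at hcp
  set S := univ.filter fun j => p < j ∧ c i j = false
  have hpS : p ∉ S := by simp [S]
  have hsum : piPos (c i) p + #S = n := piPos_add_card_filter_gt_false hcp
  have hsub : cons p S hpS ⊆ univ.filter fun j => c i j = false :=
    cons_subset.2 ⟨mem_filter.2 ⟨mem_univ p, hcp⟩,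
      fun j hj => mem_filter.2 ⟨mem_univ j, (mem_filter.1 hj).2.2⟩⟩
  have hM : #(misclassified H c) = kA := by
    -- `hkA` decides its filter with the `Fin`-specific instance `Nat.decidableExistsFin`
    rw [← hkA, misclassified]
    congr
  have hfaulty := (card_le_card hsub).trans (card_filter_classified_faulty_le hpart c hi)
  have hle_n := card_le_univ (cons p S hpS)
  rw [hM, card_cons] at hfaulty
  rw [card_cons, Fintype.card_fin] at hle_n
  omega

open Classical in
/-- If `kA` processes are misclassified by at least one honest process, at most `t`
processes are faulty, `c i` is the classification vector of an honest process `i`, `p` is a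
faulty process, and the position of `p` in `π(c i)` is at most `n − t − kA`, then `c i`
misclassifies `p` (i.e., `c i p = true`). -/
theorem early_faulty_is_misclassified {n t kA : ℕ}
    (H F : Finset (Fin n))
    (hpart : ∀ i, i ∈ H ∨ i ∈ F) (hdisj : Disjoint H F)
    (hFt : F.card ≤ t)
    (c : Fin n → Fin n → Bool)  -- classification vectors (those of honest processes matter)
    (hkA : (Finset.univ.filter (fun j : Fin n => ∃ i ∈ H, c i j ≠ decide (j ∈ H))).card = kA)
    (i : Fin n) (hi : i ∈ H)
    (p : Fin n) (hp : p ∈ F)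
    (hpos : piPos (c i) p ≤ n - t - kA) :
    c i p = true :=
  early_faulty_is_misclassified_general H F hpart hFt c hkA i hi p hpos
end

section
/- Suppose at most k_H honest processes are misclassified as faulty by at least one honest process, and r ≤ n − t − k_H. Then the number of honest processes p_i whose own index i appears among the first r positions of their own ordering π(c_i) is at most r + k_H. -/
open Finset

theorem card_filter_card_filter_le_le {α : Type*} [LinearOrder α] (A : Finset α) (r : ℕ) :
    #{a ∈ A | #{j ∈ A | j ≤ a} ≤ r} ≤ r := by
  set S := {a ∈ A | #{j ∈ A | j ≤ a} ≤ r}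
  rcases S.eq_empty_or_nonempty with hS | hS
  · simp [hS]
  -- `S` lies below its maximum, whose rank in `A` is at most `r`.
  calc #S ≤ #{j ∈ A | j ≤ S.max' hS} :=
        card_le_card fun a ha => mem_filter.2 ⟨(mem_filter.1 ha).1, S.le_max' a ha⟩
    _ ≤ r := (mem_filter.1 (S.max'_mem hS)).2

theorem card_filter_le_piPos {n : ℕ} {c : Fin n → Bool} {i : Fin n} (hi : c i = true)
    {A : Finset (Fin n)} (hA : ∀ j ∈ A, c j = true) :
    #{j ∈ A | j ≤ i} ≤ piPos c i := by
  rw [piPos, if_pos hi]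
  exact card_le_card fun j hj => by
    obtain ⟨hjA, hji⟩ := mem_filter.1 hj
    exact mem_filter.2 ⟨mem_univ j, hji, hA j hjA⟩

theorem card_filter_piPos_le_add {n : ℕ} (r : ℕ) (H M : Finset (Fin n))
    (c : Fin n → Fin n → Bool) (hM : ∀ i ∈ H, ∀ j ∈ H \ M, c i j = true) :
    #{i ∈ H | piPos (c i) i ≤ r} ≤ r + #M := by
  set A := H \ M
  have hsub : {i ∈ H | piPos (c i) i ≤ r} ⊆ M ∪ {a ∈ A | #{j ∈ A | j ≤ a} ≤ r} := by
    intro i hi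
    obtain ⟨hiH, hpos⟩ := mem_filter.1 hi
    by_cases hiM : i ∈ M
    · exact mem_union_left _ hiM
    have hiA : i ∈ A := mem_sdiff.2 ⟨hiH, hiM⟩
    exact mem_union_right _ <| mem_filter.2
      ⟨hiA, (card_filter_le_piPos (hM i hiH i hiA) (hM i hiH)).trans hpos⟩
  calc #{i ∈ H | piPos (c i) i ≤ r}
      ≤ #M + #{a ∈ A | #{j ∈ A | j ≤ a} ≤ r} :=
        (card_le_card hsub).trans (card_union_le _ _)
    _ ≤ #M + r := Nat.add_le_add_left (card_filter_card_filter_le_le A r) _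
    _ = r + #M := Nat.add_comm _ _

open Classical in
theorem honest_broadcasters_bound_general {n kH r : ℕ}
    (H : Finset (Fin n))
    (c : Fin n → Fin n → Bool)  -- classification vectors (those of honest processes matter)
    (hkH : (H.filter (fun j => ∃ i ∈ H, c i j = false)).card ≤ kH) :
    (H.filter (fun i => piPos (c i) i ≤ r)).card ≤ r + kH := by
  refine (card_filter_piPos_le_add r H _ c fun i hi j hj => ?_).trans (Nat.add_le_add_left hkH r)
  obtain ⟨hjH, hjM⟩ := mem_sdiff.1 hj
  by_contra hcij
  exact hjM (mem_filter.2 ⟨hjH, i, hi, by simpa using hcij⟩)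

open Classical in
/-- If at most `kH` honest processes are misclassified as faulty by at least one
honest process, and `r ≤ n − t − kH` (written `r + t + kH ≤ n`), then the number of honest
processes `i` whose own index appears among the first `r` positions of their own ordering
`π(c i)` is at most `r + kH`. -/
theorem honest_broadcasters_bound {n t kH r : ℕ}
    (H F : Finset (Fin n))
    (hpart : ∀ i, i ∈ H ∨ i ∈ F) (hdisj : Disjoint H F)
    (hFt : F.card ≤ t)
    (c : Fin n → Fin n → Bool)  -- classification vectors (those of honest processes matter)
    (hkH : (H.filter (fun j => ∃ i ∈ H, c i j = false)).card ≤ kH)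
    (hr : r + t + kH ≤ n) :
    (H.filter (fun i => piPos (c i) i ≤ r)).card ≤ r + kH :=
  honest_broadcasters_bound_general H c hkH
end

section
/- In the unauthenticated graded consensus with core set protocol, all honest processes that adopt a non-⊥ value b_i in round 1 (i.e., receive some value at least 2k+1 times from processes in their listening set L_i of size 3k+1, where L_i contains a common core G of at least 2k+1 honest processes) adopt the same value, and that value is the input of some honest process. -/
/-!
Every honest listening set `L i` has `3k+1` members and contains the honest core `G`, so at
most `k` of the `2k+1` senders that made `i` adopt `x` lie outside `G`: at least `#G - k` of
them are core processes. Two such sets of core processes, for `i` and `i'`, have together at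
least `2#G - 2k > #G` elements and therefore share a core process `s`. Being honest, `s` sent
the same message `v s` to everyone, so `x = v s = x'`.
-/

open Finset

namespace Finset

variable {α : Type*} [DecidableEq α]

theorem card_add_card_le_card_add_card_inter {s t u : Finset α} (hs : s ⊆ u) (ht : t ⊆ u) :
    #s + #t ≤ #u + #(s ∩ t) := by
  rw [← card_union_add_card_inter]
  exact Nat.add_le_add_right (card_le_card (union_subset hs ht)) _

theorem inter_inter_nonempty_of_card_lt {s s' t u u' : Finset α} (hs : s ⊆ u) (hs' : s' ⊆ u')
    (htu : t ⊆ u) (htu' : t ⊆ u') (hcard : #u + #u' < #s + #s' + #t) :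
    (s ∩ s' ∩ t).Nonempty := by
  have h := card_add_card_le_card_add_card_inter hs htu
  have h' := card_add_card_le_card_add_card_inter hs' htu'
  rw [inter_inter_distrib_right]
  exact inter_nonempty_of_card_lt_card_add_card inter_subset_right inter_subset_right (by omega)

end Finset

/-- In round 1 of the unauthenticated graded consensus with core set protocol,
every honest process has a listening set `L i` of size `3k+1` containing a common core `G` of
at least `2k+1` honest processes; each honest process `s` with `s ∈ L s` broadcasts its input
`v s` (modelled by `recv i s = some (v s)`; honest non-broadcasters send nothing).  If honest
processes `i` and `i'` each adopt a value (receive a value at least `2k+1` times from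
processes in their listening sets), they adopt the same value, and that value is the input of
some honest process. -/
theorem gc_round1_adopted_values_agree {V : Type} [DecidableEq V] {n k : ℕ}
    (H G : Finset (Fin n)) (L : Fin n → Finset (Fin n)) (v : Fin n → V)
    (hL : ∀ i ∈ H, (L i).card = 3 * k + 1)
    (hGH : G ⊆ H) (hGcard : 2 * k + 1 ≤ G.card)
    (hGL : ∀ i ∈ H, G ⊆ L i)
    (recv : Fin n → Fin n → Option V)  -- recv i s = value i received from s in round 1
    (hrecv : ∀ i ∈ H, ∀ s ∈ H, recv i s = if s ∈ L s then some (v s) else none)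
    (i : Fin n) (hi : i ∈ H) (i' : Fin n) (hi' : i' ∈ H) (x x' : V)
    (hx : 2 * k + 1 ≤ ((L i).filter (fun s => recv i s = some x)).card)
    (hx' : 2 * k + 1 ≤ ((L i').filter (fun s => recv i' s = some x')).card) :
    x = x' ∧ ∃ h ∈ H, x = v h := by
  obtain ⟨s, hs⟩ := inter_inter_nonempty_of_card_lt
    (filter_subset (fun s => recv i s = some x) _) (filter_subset (fun s => recv i' s = some x') _)
    (hGL i hi) (hGL i' hi') (by rw [hL i hi, hL i' hi']; omega)
  simp only [mem_inter, mem_filter] at hs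
  obtain ⟨⟨⟨-, hsx⟩, -, hsx'⟩, hsG⟩ := hs
  have hsH : s ∈ H := hGH hsG
  rw [hrecv i hi s hsH] at hsx
  rw [hrecv i' hi' s hsH] at hsx'
  split_ifs at hsx hsx'
  obtain rfl := Option.some.inj hsx
  obtain rfl := Option.some.inj hsx'
  exact ⟨rfl, s, hsH, rfl⟩
end

section
/- In the unauthenticated graded consensus with core set protocol, if every honest process has the same input value v, then every honest process returns (v, 1) (strong unanimity). -/
/-! Every member of the core `G` is honest and listens to itself, so in both rounds every honest
process receives `w` from all of `G`, which lies in its listening set; `|G| ≥ 2k+1` is exactly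
the threshold needed first to adopt `w` and then to grade it `1`. -/

theorem Finset.card_le_card_filter_of_subset {α : Type*} {s t : Finset α} {p : α → Prop}
    [DecidablePred p] (hst : s ⊆ t) (hp : ∀ x ∈ s, p x) : s.card ≤ (t.filter p).card :=
  Finset.card_le_card fun x hx => Finset.mem_filter.2 ⟨hst hx, hp x hx⟩

theorem gc_core_set_strong_unanimity_general {V : Type} [DecidableEq V] {n k : ℕ}
    (H G : Finset (Fin n)) (L : Fin n → Finset (Fin n)) (v : Fin n → V)
    (hGH : G ⊆ H) (hGcard : 2 * k + 1 ≤ G.card)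
    (hGL : ∀ i ∈ H, G ⊆ L i)
    -- round 1
    (recv1 : Fin n → Fin n → Option V)
    (hrecv1 : ∀ i ∈ H, ∀ s ∈ H, recv1 i s = if s ∈ L s then some (v s) else none)
    (b : Fin n → Option V)
    (hb : ∀ i ∈ H, ∀ x : V,
      (b i = some x ↔ 2 * k + 1 ≤ ((L i).filter (fun s => recv1 i s = some x)).card))
    -- round 2
    (recv2 : Fin n → Fin n → Option V)
    (hrecv2 : ∀ i ∈ H, ∀ s ∈ H, recv2 i s = if s ∈ L s then b s else none)
    -- outputs, following the return rules of the algorithm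
    (out : Fin n → V × Bool)
    (hout1 : ∀ i ∈ H, ∀ x : V, b i = some x →
      (out i).1 = x ∧
      ((out i).2 = true ↔ 2 * k + 1 ≤ ((L i).filter (fun s => recv2 i s = some x)).card))
    (w : V) (hunan : ∀ i ∈ H, v i = w) :
    ∀ i ∈ H, out i = (w, true) := by
  have hcore_self : ∀ s ∈ G, s ∈ L s := fun s hs => hGL s (hGH hs) hs
  have hhears_core : ∀ i ∈ H, ∀ r : Fin n → Option V, (∀ s ∈ G, r s = some w) →
      2 * k + 1 ≤ ((L i).filter (fun s => r s = some w)).card := fun i hi r hr =>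
    hGcard.trans <| Finset.card_le_card_filter_of_subset (hGL i hi) hr
  have hb_w : ∀ i ∈ H, b i = some w := fun i hi =>
    (hb i hi w).2 <| hhears_core i hi (recv1 i) fun s hs => by
      rw [hrecv1 i hi s (hGH hs), if_pos (hcore_self s hs), hunan s (hGH hs)]
  intro i hi
  obtain ⟨hfst, hgrade⟩ := hout1 i hi w (hb_w i hi)
  refine Prod.ext hfst (hgrade.2 <| hhears_core i hi (recv2 i) fun s hs => ?_)
  rw [hrecv2 i hi s (hGH hs), if_pos (hcore_self s hs), hb_w s (hGH hs)]

/-- Strong unanimity of graded-consensus-with-core-set: each honest process `i`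
has input `v i`, a listening set `L i` of size `3k+1` containing a common core `G ⊆ H` of at
least `2k+1` honest processes.  Round 1: honest `s` with `s ∈ L s` broadcasts `v s`; `b i` is
the value received at least `2k+1` times from `L i` (else `none`).  Round 2: honest `s` with
`s ∈ L s` and `b s ≠ none` broadcasts `b s`; `out i` follows the algorithm's return rules.
If every honest process has the same input value `w`, then every honest process returns
`(w, true)` (grade 1). -/
theorem gc_core_set_strong_unanimity {V : Type} [DecidableEq V] {n k : ℕ}
    (H G : Finset (Fin n)) (L : Fin n → Finset (Fin n)) (v : Fin n → V)
    (hL : ∀ i ∈ H, (L i).card = 3 * k + 1)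
    (hGH : G ⊆ H) (hGcard : 2 * k + 1 ≤ G.card)
    (hGL : ∀ i ∈ H, G ⊆ L i)
    -- round 1
    (recv1 : Fin n → Fin n → Option V)
    (hrecv1 : ∀ i ∈ H, ∀ s ∈ H, recv1 i s = if s ∈ L s then some (v s) else none)
    (b : Fin n → Option V)
    (hb : ∀ i ∈ H, ∀ x : V,
      (b i = some x ↔ 2 * k + 1 ≤ ((L i).filter (fun s => recv1 i s = some x)).card))
    -- round 2
    (recv2 : Fin n → Fin n → Option V)
    (hrecv2 : ∀ i ∈ H, ∀ s ∈ H, recv2 i s = if s ∈ L s then b s else none)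
    -- outputs, following the return rules of the algorithm
    (out : Fin n → V × Bool)
    (hout1 : ∀ i ∈ H, ∀ x : V, b i = some x →
      (out i).1 = x ∧
      ((out i).2 = true ↔ 2 * k + 1 ≤ ((L i).filter (fun s => recv2 i s = some x)).card))
    (hout2 : ∀ i ∈ H, b i = none →
      (out i).2 = false ∧
      ((∃ x : V, k + 1 ≤ ((L i).filter (fun s => recv2 i s = some x)).card) →
        k + 1 ≤ ((L i).filter (fun s => recv2 i s = some ((out i).1))).card) ∧
      ((¬ ∃ x : V, k + 1 ≤ ((L i).filter (fun s => recv2 i s = some x)).card) →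
        (out i).1 = v i))
    (w : V) (hunan : ∀ i ∈ H, v i = w) :
    ∀ i ∈ H, out i = (w, true) :=
  gc_core_set_strong_unanimity_general H G L v hGH hGcard hGL recv1 hrecv1 b hb recv2 hrecv2 out
    hout1 w hunan
end

section
/- In the conciliation-with-core-set protocol's reachability graph, if T is the set of honest processes p_j with j ∈ L_j, every honest process's listening set consists only of honest processes, and there is a directed path in the graph (T_i, E_i) from vertex y to a vertex j ∈ T, then y ∈ T. -/
/-! Membership in `T` propagates backwards along every edge `(a, b)`: if `b ∈ T` then `b` is
honest, so its claimed listening set is its true one, which contains only honest processes;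
hence `a` is an honest member of `Ti`, i.e. `a ∈ T`. A path to `j ∈ T` therefore carries
membership back to its start. -/

lemma Relation.ReflTransGen.closed' {α : Type*} {r : α → α → Prop} {P : α → Prop}
    (dc : ∀ {a b}, r a b → P b → P a) {a b : α} (h : Relation.ReflTransGen r a b) :
    P b → P a :=
  h.head_induction_on id fun hr _ hi ↦ dc hr ∘ hi

lemma mem_of_mem_claimed_of_mem {α : Type*} {H T Ti : Finset α} {L Lc : α → Finset α}
    (hLH : ∀ i ∈ H, L i ⊆ H) (hTH : T ⊆ H) (hTiH : ∀ y ∈ Ti, y ∈ H → y ∈ T)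
    (hLc : ∀ z ∈ H, Lc z = L z) {a b : α} (ha : a ∈ Ti) (hab : a ∈ Lc b) (hb : b ∈ T) :
    a ∈ T := by
  have hbH : b ∈ H := hTH hb
  rw [hLc b hbH] at hab
  exact hTiH a ha (hLH b hbH hab)

theorem conciliation_path_lemma_general {n : ℕ}
    (H : Finset (Fin n))
    (L : Fin n → Finset (Fin n))
    (hLH : ∀ i ∈ H, L i ⊆ H)
    (T : Finset (Fin n)) (hT : T = H.filter (fun i => i ∈ L i))
    (Ti : Finset (Fin n)) (hTiH : ∀ y ∈ Ti, y ∈ H → y ∈ T)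
    (Lc : Fin n → Finset (Fin n)) (hLc : ∀ z ∈ H, Lc z = L z)
    (y j : Fin n) (hj : j ∈ T)
    (hpath : Relation.ReflTransGen (fun a b => a ∈ Ti ∧ b ∈ Ti ∧ a ∈ Lc b) y j) :
    y ∈ T := by
  have hTH : T ⊆ H := hT ▸ Finset.filter_subset _ H
  exact hpath.closed' (fun ⟨ha, _, hab⟩ ↦ mem_of_mem_claimed_of_mem hLH hTH hTiH hLc ha hab) hj

/-- In the conciliation-with-core-set reachability graph, let
`T = {i ∈ H : i ∈ L i}` be the honest broadcasters, where every honest listening set consists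
only of honest processes.  `Ti` is the set of senders a fixed honest process heard from
(`T ⊆ Ti`, and the honest members of `Ti` are exactly `T`); `Lc z` is the listening set claimed
in `z`'s message, truthful for honest `z`.  If there is a directed path from `y` to some
`j ∈ T` along the edges `(a,b)` with `a, b ∈ Ti` and `a ∈ Lc b`, then `y ∈ T`. -/
theorem conciliation_path_lemma {n : ℕ}
    (H F : Finset (Fin n))
    (hpart : ∀ i, i ∈ H ∨ i ∈ F) (hdisj : Disjoint H F)
    (L : Fin n → Finset (Fin n))
    (hLH : ∀ i ∈ H, L i ⊆ H)
    (T : Finset (Fin n)) (hT : T = H.filter (fun i => i ∈ L i))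
    (Ti : Finset (Fin n)) (hTTi : T ⊆ Ti) (hTiH : ∀ y ∈ Ti, y ∈ H → y ∈ T)
    (Lc : Fin n → Finset (Fin n)) (hLc : ∀ z ∈ H, Lc z = L z)
    (y j : Fin n) (hj : j ∈ T)
    (hpath : Relation.ReflTransGen (fun a b => a ∈ Ti ∧ b ∈ Ti ∧ a ∈ Lc b) y j) :
    y ∈ T :=
  conciliation_path_lemma_general H L hLH T hT Ti hTiH Lc hLc y j hj hpath
end

section
/- The conciliation-with-core-set protocol satisfies agreement: if all honest processes' listening sets contain only honest processes and share a common honest core G of size at least 2k+1, then all honest processes return the same value. -/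
/-!
Every path in a process's graph that ends at an honest vertex runs through honest vertices
only, because an honest vertex's listening set is honest and its claims are truthful. Hence for
an honest target `z` the broadcasters reaching `z`, and so `m i z`, are the same for every honest
`i`. Members of the core `G` are mutually adjacent, so they reach each other and `m i` is constant
on `G`. This common value is taken by at least `2k + 1` of the at most `3k + 1` candidates, a
strict majority, so it is every honest process's plurality output.
-/

open Finset Relation

theorem Finset.plurality_eq_of_two_mul_card_filter_gt {α β : Type*} [DecidableEq β]
    {s : Finset α} {f : α → β} {b c : β}
    (hb : ∀ w, #(s.filter (f · = w)) ≤ #(s.filter (f · = b)))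
    (hc : #s < 2 * #(s.filter (f · = c))) : b = c := by
  classical
  by_contra hbc
  have hdisj : Disjoint (s.filter (f · = c)) (s.filter (f · = b)) :=
    disjoint_filter_filter' _ _ fun p hpc hpb x hx => hbc ((hpb x hx).symm.trans (hpc x hx))
  have hsum : #(s.filter (f · = c)) + #(s.filter (f · = b)) ≤ #s := by
    rw [← card_union_of_disjoint hdisj]
    exact card_le_card (union_subset (filter_subset _ _) (filter_subset _ _))
  have := hb c
  omega

theorem Relation.ReflTransGen.of_backward_closed {α : Type*} {r r' : α → α → Prop}
    {p : α → Prop} (h : ∀ a b, r a b → p b → p a ∧ r' a b) {a b : α}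
    (hab : ReflTransGen r a b) (hb : p b) : p a ∧ ReflTransGen r' a b := by
  induction hab using ReflTransGen.head_induction_on with
  | refl => exact ⟨hb, .refl⟩
  | head hac _ ih =>
    obtain ⟨hc, hcb⟩ := ih
    obtain ⟨ha, hac'⟩ := h _ _ hac hc
    exact ⟨ha, .head hac' hcb⟩

namespace Conciliation

variable {α : Type*}

def heardGraph (Ti : Finset α) (Lc : α → Finset α) (a b : α) : Prop :=
  a ∈ Ti ∧ b ∈ Ti ∧ a ∈ Lc b

variable {H T Ti : Finset α} {L Lc : α → Finset α}

theorem reflTransGen_heardGraph_mono (hTTi : T ⊆ Ti) (hLc : ∀ s ∈ T, Lc s = L s) :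
    ReflTransGen (heardGraph T L) ≤ ReflTransGen (heardGraph Ti Lc) :=
  ReflTransGen.mono fun _ b ⟨ha, hb, hab⟩ => ⟨hTTi ha, hTTi hb, hLc b hb ▸ hab⟩

theorem honest_of_reflTransGen_heardGraph (hLH : ∀ s ∈ H, L s ⊆ H)
    (hTiH : ∀ y ∈ Ti, y ∈ H → y ∈ T) (hLc : ∀ s ∈ H, Lc s = L s) {y z : α} (hz : z ∈ H)
    (hyz : ReflTransGen (heardGraph Ti Lc) y z) :
    y ∈ H ∧ ReflTransGen (heardGraph T L) y z := by
  refine hyz.of_backward_closed (p := (· ∈ H)) (fun a b ⟨ha, hb, hab⟩ hbH => ?_) hz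
  rw [hLc b hbH] at hab
  have haH := hLH b hbH hab
  exact ⟨haH, hTiH a ha haH, hTiH b hb hbH, hab⟩

variable [DecidableEq α]

open Classical in
noncomputable def broadcastersReaching (Ti : Finset α) (Lc : α → Finset α) (z : α) :
    Finset α :=
  Ti.filter fun y => y ∈ Lc y ∧ ReflTransGen (heardGraph Ti Lc) y z

theorem broadcastersReaching_subset_of_heardGraph {a b : α} (hab : heardGraph Ti Lc a b) :
    broadcastersReaching Ti Lc a ⊆ broadcastersReaching Ti Lc b := by
  intro y
  simp only [broadcastersReaching, mem_filter]
  exact fun ⟨hy, hyL, hya⟩ => ⟨hy, hyL, hya.tail hab⟩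

theorem broadcastersReaching_eq_of_honest (hLH : ∀ s ∈ H, L s ⊆ H) (hTH : T ⊆ H)
    (hTL : ∀ y ∈ T, y ∈ L y) (hTTi : T ⊆ Ti) (hTiH : ∀ y ∈ Ti, y ∈ H → y ∈ T)
    (hLc : ∀ s ∈ H, Lc s = L s) {z : α} (hz : z ∈ H) :
    broadcastersReaching Ti Lc z = broadcastersReaching T L z := by
  ext y
  simp only [broadcastersReaching, mem_filter]
  constructor
  · rintro ⟨hyTi, -, hyz⟩
    obtain ⟨hyH, hyz'⟩ := honest_of_reflTransGen_heardGraph hLH hTiH hLc hz hyz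
    have hyT := hTiH y hyTi hyH
    exact ⟨hyT, hTL y hyT, hyz'⟩
  · rintro ⟨hyT, hyL, hyz⟩
    exact ⟨hTTi hyT, hLc y (hTH hyT) ▸ hyL,
      reflTransGen_heardGraph_mono hTTi (fun s hs => hLc s (hTH hs)) _ _ hyz⟩

end Conciliation

open Conciliation

open Classical in
theorem conciliation_agreement_general {V : Type} [LinearOrder V] {n k : ℕ}
    (H G : Finset (Fin n)) (L : Fin n → Finset (Fin n)) (v : Fin n → V)
    (hL : ∀ i ∈ H, (L i).card = 3 * k + 1)
    (hLH : ∀ i ∈ H, L i ⊆ H)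
    (hGH : G ⊆ H) (hGcard : 2 * k + 1 ≤ G.card)
    (hGL : ∀ i ∈ H, G ⊆ L i)
    (T : Finset (Fin n)) (hT : T = H.filter (fun i => i ∈ L i))
    (Ti : Fin n → Finset (Fin n))
    (hTTi : ∀ i ∈ H, T ⊆ Ti i)
    (hTiH : ∀ i ∈ H, ∀ y ∈ Ti i, y ∈ H → y ∈ T)
    (vc : Fin n → Fin n → V) (Lc : Fin n → Fin n → Finset (Fin n))
    (hvc : ∀ i ∈ H, ∀ s ∈ H, vc i s = v s)
    (hLc : ∀ i ∈ H, ∀ s ∈ H, Lc i s = L s)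
    (m : Fin n → Fin n → WithTop V)
    (hm : ∀ i ∈ H, ∀ z : Fin n, m i z =
      (((Ti i).filter (fun y => y ∈ Lc i y ∧
          Relation.ReflTransGen (fun a b => a ∈ Ti i ∧ b ∈ Ti i ∧ a ∈ Lc i b) y z)).image
        (fun y => vc i y)).min)
    (out : Fin n → WithTop V)
    (hplur : ∀ i ∈ H, ∀ w : WithTop V,
      ((Ti i ∩ L i).filter (fun z => m i z = w)).card ≤
        ((Ti i ∩ L i).filter (fun z => m i z = out i)).card) :
    ∀ i ∈ H, ∀ i' ∈ H, out i = out i' := by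
  have hTH : T ⊆ H := hT ▸ filter_subset _ _
  have hTL : ∀ y ∈ T, y ∈ L y := fun y hy => (mem_filter.mp (hT ▸ hy :)).2
  have hGT : G ⊆ T := fun j hj => hT ▸ mem_filter.mpr ⟨hGH hj, hGL j (hGH hj) hj⟩
  obtain ⟨j₀, hj₀⟩ : G.Nonempty := card_pos.mp (by omega)
  set c := ((broadcastersReaching T L j₀).image v).min
  have hmG : ∀ i ∈ H, ∀ j ∈ G, m i j = c := fun i hi j hj => by
    have hG : broadcastersReaching T L j = broadcastersReaching T L j₀ :=
      (broadcastersReaching_subset_of_heardGraph ⟨hGT hj, hGT hj₀, hGL j₀ (hGH hj₀) hj⟩).antisymm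
        (broadcastersReaching_subset_of_heardGraph ⟨hGT hj₀, hGT hj, hGL j (hGH hj) hj₀⟩)
    have hmj : m i j = ((broadcastersReaching (Ti i) (Lc i) j).image (vc i)).min := hm i hi j
    rw [hmj, broadcastersReaching_eq_of_honest hLH hTH hTL
      (hTTi i hi) (hTiH i hi) (hLc i hi) (hGH hj), hG]
    exact congrArg Finset.min (image_congr fun y hy => hvc i hi y (hTH (filter_subset _ _ hy)))
  have hout : ∀ i ∈ H, out i = c := fun i hi => by
    refine plurality_eq_of_two_mul_card_filter_gt (hplur i hi) ?_
    have hGc : G ⊆ (Ti i ∩ L i).filter (m i · = c) := fun j hj =>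
      mem_filter.mpr ⟨mem_inter.mpr ⟨hTTi i hi (hGT hj), hGL i hi hj⟩, hmG i hi j hj⟩
    have := card_le_card hGc
    have := card_le_card (inter_subset_right (s₁ := Ti i) (s₂ := L i))
    have := hL i hi
    omega
  exact fun i hi i' hi' => (hout i hi).trans (hout i' hi').symm

open Classical in
/-- Agreement of conciliation-with-core-set: each honest process `i` has input
`v i` and a listening set `L i ⊆ H` of size `3k+1`; all honest listening sets share a common
honest core `G` of size at least `2k+1`.  The honest broadcasters are `T = {i ∈ H : i ∈ L i}`;
`Ti i` is the set of senders honest `i` heard from (`T ⊆ Ti i`, honest members of `Ti i` are in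
`T`); `vc i s` and `Lc i s` are the value and listening set claimed by sender `s` to `i`
(truthful for honest `s`).  `m i z` is the minimum of the claimed values `vc i y` over
broadcasters `y` (with `y ∈ Lc i y`) having a path to `z` in the graph on `Ti i` with edges
`(a,b)` for `a ∈ Lc i b`; `out i` is a most frequently occurring value among
`{m i z : z ∈ Ti i ∩ L i}`.  Then all honest processes return the same value. -/
theorem conciliation_agreement {V : Type} [LinearOrder V] {n k : ℕ}
    (H G : Finset (Fin n)) (L : Fin n → Finset (Fin n)) (v : Fin n → V)
    (hL : ∀ i ∈ H, (L i).card = 3 * k + 1)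
    (hLH : ∀ i ∈ H, L i ⊆ H)
    (hGH : G ⊆ H) (hGcard : 2 * k + 1 ≤ G.card)
    (hGL : ∀ i ∈ H, G ⊆ L i)
    (T : Finset (Fin n)) (hT : T = H.filter (fun i => i ∈ L i))
    (Ti : Fin n → Finset (Fin n))
    (hTTi : ∀ i ∈ H, T ⊆ Ti i)
    (hTiH : ∀ i ∈ H, ∀ y ∈ Ti i, y ∈ H → y ∈ T)
    (vc : Fin n → Fin n → V) (Lc : Fin n → Fin n → Finset (Fin n))
    (hvc : ∀ i ∈ H, ∀ s ∈ H, vc i s = v s)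
    (hLc : ∀ i ∈ H, ∀ s ∈ H, Lc i s = L s)
    (m : Fin n → Fin n → WithTop V)
    (hm : ∀ i ∈ H, ∀ z : Fin n, m i z =
      (((Ti i).filter (fun y => y ∈ Lc i y ∧
          Relation.ReflTransGen (fun a b => a ∈ Ti i ∧ b ∈ Ti i ∧ a ∈ Lc i b) y z)).image
        (fun y => vc i y)).min)
    (out : Fin n → WithTop V)
    (hout : ∀ i ∈ H, ∃ z ∈ Ti i ∩ L i, out i = m i z)
    (hplur : ∀ i ∈ H, ∀ w : WithTop V,
      ((Ti i ∩ L i).filter (fun z => m i z = w)).card ≤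
        ((Ti i ∩ L i).filter (fun z => m i z = out i)).card) :
    ∀ i ∈ H, ∀ i' ∈ H, out i = out i' :=
  conciliation_agreement_general H G L v hL hLH hGH hGcard hGL T hT Ti hTTi hTiH vc Lc hvc hLc m hm
    out hplur
end

section
/- In the unauthenticated Byzantine agreement with classification, a faulty process p_j can belong to the listening set L_i of some honest process p_i in at most two (consecutive) of the 2k+1 phases, where in phase φ, L_i consists of the identifiers in positions (3k+1)(φ−1)+1 through (3k+1)φ of π(c_i), assuming (3k+1)(2k+1) ≤ n − t − k and at most k misclassified processes. -/
open Classical in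
/-- The set of phases `φ ∈ {1, …, 2k+1}` during which process `j` belongs to the listening set
`L i` of some honest process `i`, i.e. the position of `j` in `π(c i)` lies in the range
`(3k+1)(φ−1)+1 … (3k+1)φ`. -/
noncomputable def phasesAppearing {n : ℕ} (k : ℕ) (H : Finset (Fin n))
    (c : Fin n → Fin n → Bool) (j : Fin n) : Finset ℕ :=
  (Finset.Icc 1 (2 * k + 1)).filter (fun φ => ∃ i ∈ H,
    (3 * k + 1) * (φ - 1) < piPos (c i) j ∧ piPos (c i) j ≤ (3 * k + 1) * φ)


/-!
Every process among the first `n - t - k` positions of an honest ordering `π(c i)` is classified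
as honest by `c i`: a process classified as faulty comes after all those classified as honest, and
these include the at least `n - t - k` honest processes that no honest process misclassifies.
Two honest vectors agree outside the at most `k` misclassified processes, so if both classify `j`
as honest, the positions of `j` in the two orderings differ by at most `k < 3k + 1`, the length of
a phase. As all phases lie within the first `(3k+1)(2k+1) ≤ n - t - k` positions, the phases in
which `j` is listened to are consecutive, hence at most two.
-/

open Finset

section Positions

variable {n : ℕ}

lemma piPos_of_true {c : Fin n → Bool} {j : Fin n} (hj : c j = true) :
    piPos c j = #(univ.filter fun x => x ≤ j ∧ c x) := by
  simp [piPos, hj]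

lemma piPos_of_false {c : Fin n → Bool} {j : Fin n} (hj : c j = false) :
    piPos c j = (j : ℕ) + 1 + #(univ.filter fun x => j < x ∧ c x) := by
  simp [piPos, hj]

lemma card_filter_lt_piPos_of_false {c : Fin n → Bool} {j : Fin n} (hj : c j = false) :
    #(univ.filter fun x => c x) < piPos c j := by
  have hsplit : univ.filter (fun x => c x) ⊆
      Iio j ∪ univ.filter fun x => j < x ∧ c x := by
    intro x hx
    rw [mem_filter] at hx
    rcases lt_trichotomy x j with hlt | rfl | hgt
    · exact mem_union_left _ (mem_Iio.mpr hlt)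
    · simp [hj] at hx
    · exact mem_union_right _ (mem_filter.mpr ⟨mem_univ x, hgt, hx.2⟩)
  calc #(univ.filter fun x => c x)
      ≤ #(Iio j) + #(univ.filter fun x => j < x ∧ c x) :=
        (card_le_card hsplit).trans (card_union_le _ _)
    _ < piPos c j := by rw [Fin.card_Iio, piPos_of_false hj]; omega

lemma eq_true_of_piPos_add_card_le {c : Fin n → Bool} {H M : Finset (Fin n)}
    (hc : ∀ x ∈ H, x ∉ M → c x = true) {j : Fin n} (hpos : piPos c j + #M ≤ #H) :
    c j = true := by
  by_contra hj
  have hHM : H \ M ⊆ univ.filter fun x => c x := fun x hx => by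
    rw [mem_sdiff] at hx
    exact mem_filter.mpr ⟨mem_univ x, hc x hx.1 hx.2⟩
  have := card_filter_lt_piPos_of_false (Bool.eq_false_iff.mpr hj)
  have := (card_le_card_sdiff_add_card (s := H) (t := M)).trans
    (Nat.add_le_add_right (card_le_card hHM) _)
  omega

lemma piPos_le_piPos_add_card {c c' : Fin n → Bool} {M : Finset (Fin n)}
    (hagree : ∀ x ∉ M, c x = c' x) {j : Fin n} (hj : c j = true) (hj' : c' j = true) :
    piPos c j ≤ piPos c' j + #M := by
  rw [piPos_of_true hj, piPos_of_true hj']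
  refine (card_le_card fun x hx => ?_).trans (card_union_le _ M)
  rw [mem_filter] at hx
  by_cases hxM : x ∈ M
  · exact mem_union_right _ hxM
  · exact mem_union_left _ (mem_filter.mpr ⟨mem_univ x, hx.2.1, hagree x hxM ▸ hx.2.2⟩)

end Positions

lemma le_succ_of_le_mul_of_mul_pred_lt {w d p p' φ φ' : ℕ} (hd : d < w) (hp : p ≤ w * φ)
    (hp' : w * (φ' - 1) < p') (hpp' : p' ≤ p + d) : φ' ≤ φ + 1 := by
  by_contra! h
  have : w * (φ + 1) ≤ w * (φ' - 1) := Nat.mul_le_mul_left w (by omega)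
  rw [mul_add_one] at this
  omega

lemma Finset.card_le_two_of_forall_le_succ {S : Finset ℕ}
    (hS : ∀ φ ∈ S, ∀ φ' ∈ S, φ ≤ φ' → φ' ≤ φ + 1) : #S ≤ 2 := by
  rcases S.eq_empty_or_nonempty with rfl | hne
  · simp
  · have hsub : S ⊆ Icc (S.min' hne) (S.min' hne + 1) := fun φ hφ =>
      mem_Icc.mpr ⟨min'_le _ _ hφ, hS _ (min'_mem _ hne) φ hφ (min'_le _ _ hφ)⟩
    have := card_le_card hsub
    rw [Nat.card_Icc] at this
    omega

open Classical in
theorem faulty_in_at_most_two_phases_general {n t k f : ℕ}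
    (H F : Finset (Fin n))
    (hpart : ∀ i, i ∈ H ∨ i ∈ F)
    (hF : F.card = f) (hft : f ≤ t)
    (c : Fin n → Fin n → Bool)
    (hmis : (Finset.univ.filter (fun j : Fin n => ∃ i ∈ H, c i j ≠ decide (j ∈ H))).card ≤ k)
    (hsize : (3 * k + 1) * (2 * k + 1) + t + k ≤ n)
    (j : Fin n) :
    (phasesAppearing k H c j).card ≤ 2 ∧
      ∀ φ ∈ phasesAppearing k H c j, ∀ φ' ∈ phasesAppearing k H c j,
        φ ≤ φ' → φ' ≤ φ + 1 := by
  set M := Finset.univ.filter (fun j : Fin n => ∃ i ∈ H, c i j ≠ decide (j ∈ H))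
  have hM : ∀ x ∉ M, ∀ i ∈ H, c i x = decide (x ∈ H) := fun x hx i hi => by
    by_contra h
    exact hx (mem_filter.mpr ⟨mem_univ x, i, hi, h⟩)
  have hn : n ≤ #H + t := calc
    n = #(univ : Finset (Fin n)) := (card_fin n).symm
    _ ≤ #(H ∪ F) := card_le_card fun i _ => mem_union.mpr (hpart i)
    _ ≤ #H + #F := card_union_le H F
    _ ≤ #H + t := by omega
  have hclassified_honest : ∀ i ∈ H, piPos (c i) j ≤ (3 * k + 1) * (2 * k + 1) → c i j = true :=
    fun i hi hpos => eq_true_of_piPos_add_card_le (H := H) (M := M)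
      (fun x hx hxM => by simpa [hx] using hM x hxM i hi) (by omega)
  have hconsec : ∀ φ ∈ phasesAppearing k H c j, ∀ φ' ∈ phasesAppearing k H c j,
      φ ≤ φ' → φ' ≤ φ + 1 := by
    intro φ hφ φ' hφ' _
    simp only [phasesAppearing, mem_filter, mem_Icc] at hφ hφ'
    obtain ⟨⟨-, hφk⟩, i, hi, -, hhi⟩ := hφ
    obtain ⟨⟨-, hφ'k⟩, i', hi', hlo', hhi'⟩ := hφ'
    have htrue := hclassified_honest i hi (hhi.trans (Nat.mul_le_mul_left _ hφk))
    have htrue' := hclassified_honest i' hi' (hhi'.trans (Nat.mul_le_mul_left _ hφ'k))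
    have hclose := piPos_le_piPos_add_card
      (fun x hx => (hM x hx i' hi').trans (hM x hx i hi).symm) htrue' htrue
    exact le_succ_of_le_mul_of_mul_pred_lt (by omega : k < 3 * k + 1) hhi hlo'
      (hclose.trans (by omega))
  exact ⟨card_le_two_of_forall_le_succ hconsec, hconsec⟩

open Classical in
/-- In the unauthenticated Byzantine agreement with classification, assuming
`(3k+1)(2k+1) ≤ n − t − k` and at most `k` processes misclassified by some honest process,
a faulty process `j` can belong to the listening set of some honest process in at most two
consecutive of the `2k+1` phases. -/
theorem faulty_in_at_most_two_phases {n t k f : ℕ}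
    (H F : Finset (Fin n))
    (hpart : ∀ i, i ∈ H ∨ i ∈ F) (hdisj : Disjoint H F)
    (hF : F.card = f) (hft : f ≤ t)
    (c : Fin n → Fin n → Bool)
    (hmis : (Finset.univ.filter (fun j : Fin n => ∃ i ∈ H, c i j ≠ decide (j ∈ H))).card ≤ k)
    (hsize : (3 * k + 1) * (2 * k + 1) + t + k ≤ n)
    (j : Fin n) (hj : j ∈ F) :
    (phasesAppearing k H c j).card ≤ 2 ∧
      ∀ φ ∈ phasesAppearing k H c j, ∀ φ' ∈ phasesAppearing k H c j,
        φ ≤ φ' → φ' ≤ φ + 1 :=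
  faulty_in_at_most_two_phases_general H F hpart hF hft c hmis hsize j
end

section
/- In the unauthenticated Byzantine agreement with classification running 2k+1 phases with at most k misclassified faulty processes and each faulty process appearing in honest listening sets in at most two phases, there exists a phase φ ∈ {1,…,2k+1} in which L_i ⊆ H for every honest process p_i. -/
/-! Each faulty process that ever reaches an honest listening set is misclassified, so at most `k`
of them block a phase, each blocking at most two; `2k` blocked phases leave one of the `2k+1`
phases free. -/

open Finset

theorem Finset.exists_mem_forall_notMem_of_card_mul_lt {ι α : Type*} [DecidableEq α]
    {s : Finset ι} {A : ι → Finset α} {P : Finset α} {m : ℕ}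
    (hA : ∀ j ∈ s, #(A j) ≤ m) (hP : #s * m < #P) :
    ∃ x ∈ P, ∀ j ∈ s, x ∉ A j := by
  obtain ⟨x, hxP, hxA⟩ :=
    exists_mem_notMem_of_card_lt_card ((card_biUnion_le_card_mul s A m hA).trans_lt hP)
  exact ⟨x, hxP, fun j hj hx => hxA (mem_biUnion.2 ⟨j, hj, hx⟩)⟩

open Classical in
theorem exists_all_honest_phase_general {n k : ℕ}
    (H F : Finset (Fin n))
    (hpart : ∀ i, i ∈ H ∨ i ∈ F)
    (c : Fin n → Fin n → Bool)
    (MF : Finset (Fin n))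
    (hMFcard : MF.card ≤ k)
    (happear : ∀ j ∈ F, (phasesAppearing k H c j).Nonempty → j ∈ MF)
    (htwo : ∀ j ∈ F, (phasesAppearing k H c j).card ≤ 2) :
    ∃ φ ∈ Finset.Icc 1 (2 * k + 1), ∀ i ∈ H, ∀ j : Fin n,
      ((3 * k + 1) * (φ - 1) < piPos (c i) j ∧ piPos (c i) j ≤ (3 * k + 1) * φ) →
        j ∈ H := by
  set blockers := F.filter fun j => (phasesAppearing k H c j).Nonempty
  have hblockers : #blockers ≤ k :=
    (card_le_card fun j hj => happear j (mem_filter.1 hj).1 (mem_filter.1 hj).2).trans hMFcard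
  obtain ⟨φ, hφ, hfree⟩ :=
    exists_mem_forall_notMem_of_card_mul_lt (s := blockers) (P := Icc 1 (2 * k + 1))
      (fun j hj => htwo j (mem_filter.1 hj).1) (by rw [Nat.card_Icc]; omega)
  refine ⟨φ, hφ, fun i hi j hj => ?_⟩
  by_contra hjH
  have hjφ : φ ∈ phasesAppearing k H c j := mem_filter.2 ⟨hφ, i, hi, hj⟩
  exact hfree j (mem_filter.2 ⟨(hpart j).resolve_left hjH, φ, hjφ⟩) hjφ

open Classical in
/-- With `2k+1` phases, at most `k` misclassified faulty processes, every faulty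
process appearing in an honest listening set being misclassified, and each faulty process
appearing in honest listening sets in at most two phases, there is a phase `φ ∈ {1,…,2k+1}`
in which the listening set of every honest process contains only honest processes. -/
theorem exists_all_honest_phase {n t k : ℕ}
    (H F : Finset (Fin n))
    (hpart : ∀ i, i ∈ H ∨ i ∈ F) (hdisj : Disjoint H F)
    (hFt : F.card ≤ t)
    (c : Fin n → Fin n → Bool)
    (hsize : (3 * k + 1) * (2 * k + 1) + t + k ≤ n)
    (MF : Finset (Fin n)) (hMF : MF = F.filter (fun j => ∃ i ∈ H, c i j = true))
    (hMFcard : MF.card ≤ k)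
    (happear : ∀ j ∈ F, (phasesAppearing k H c j).Nonempty → j ∈ MF)
    (htwo : ∀ j ∈ F, (phasesAppearing k H c j).card ≤ 2) :
    ∃ φ ∈ Finset.Icc 1 (2 * k + 1), ∀ i ∈ H, ∀ j : Fin n,
      ((3 * k + 1) * (φ - 1) < piPos (c i) j ∧ piPos (c i) j ≤ (3 * k + 1) * φ) →
        j ∈ H :=
  exists_all_honest_phase_general H F hpart c MF hMFcard happear htwo
end
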